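/- Let n be a positive integer, λ an infinite cardinal, and τ a shift-continuous T₁ topology on I_λ^n. Then the natural partial order ≼ is closed in (I_λ^n, τ) × (I_λ^n, τ), i.e., (I_λ^n, τ, ≼) is a pospace. -/

import Mathlib

open Set Topology

universe v

namespace ISemi

/-- The set of partial injective transformations (partial bijections) of `ι`
with rank (cardinality of the range, equivalently of the domain) at most `n`. -/
def Elem (ι : Type*) (n : ℕ) : Type _ :=
  {f : ι ≃. ι // {a : ι | (f a).isSome}.encard ≤ (n : ℕ∞)}

variable {ι : Type*} {n : ℕ}

/-- Composition of partial bijections (written multiplicatively). -/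
instance : Semigroup (Elem ι n) where
  mul f g := ⟨f.1.trans g.1, by
    refine le_trans (Set.encard_mono ?_) f.2
    intro a ha
    simp only [Set.mem_setOf_eq] at *
    rcases Option.isSome_iff_exists.1 ha with ⟨c, hc⟩
    rcases (PEquiv.trans_eq_some _ _ _ _).1 hc with ⟨b, hb, -⟩
    simp [hb]⟩
  mul_assoc f g h := Subtype.ext (PEquiv.trans_assoc f.1 g.1 h.1)

/-- The inverse partial bijection. -/
def inv (f : Elem ι n) : Elem ι n := ⟨f.1.symm, by
  have key : ∀ (g : ι ≃. ι), {b : ι | (g.symm b).isSome} ⊆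
      (fun p : {a : ι | (g a).isSome} => (g p.1).get p.2) '' Set.univ := by
    intro g b hb
    rcases Option.isSome_iff_exists.1 hb with ⟨a, ha⟩
    have ha' : b ∈ g a := (PEquiv.mem_iff_mem g).1 (Option.mem_def.2 ha)
    simp only [Option.mem_def] at ha'
    refine ⟨⟨a, ?_⟩, Set.mem_univ _, ?_⟩
    · simp [Set.mem_setOf_eq, ha']
    · simp [ha']
  calc {b : ι | (f.1.symm b).isSome}.encard
      ≤ ((fun p : {a : ι | (f.1 a).isSome} => (f.1 p.1).get p.2) '' Set.univ).encard :=
        Set.encard_mono (key f.1)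
    _ ≤ (Set.univ : Set {a : ι | (f.1 a).isSome}).encard := Set.encard_image_le _ _
    _ = {a : ι | (f.1 a).isSome}.encard := Set.encard_univ _
    _ ≤ (n : ℕ∞) := f.2⟩

/-- The zero (the empty partial map). -/
def zero (ι : Type*) (n : ℕ) : Elem ι n := ⟨⊥, by simp [PEquiv.bot_apply]⟩

/-- idempotents -/
def IsIdem (e : Elem ι n) : Prop := e * e = e

/-- The natural partial order on the inverse semigroup `Elem ι n`:
`f ≼ g` iff `f = e * g` for some idempotent `e`. -/
def nle (f g : Elem ι n) : Prop := ∃ e : Elem ι n, IsIdem e ∧ f = e * g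

/-- up-set of `f` w.r.t. the natural partial order -/
def upset (f : Elem ι n) : Set (Elem ι n) := {g | nle f g}

/-- the rank of a partial bijection: the cardinality of its domain (= range) -/
noncomputable def rank (f : Elem ι n) : ℕ∞ := {a : ι | (f.1 a).isSome}.encard

def dom (f : Elem ι n) : Set ι := {a : ι | (f.1 a).isSome}

def ran (f : Elem ι n) : Set ι := {b : ι | (f.1.symm b).isSome}

/-- A topology on `Elem ι n` is shift-continuous if all left and right
translations are continuous. -/
def ShiftContinuous (ι : Type*) (n : ℕ) [TopologicalSpace (Elem ι n)] : Prop :=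
  ∀ a : Elem ι n, Continuous (fun x : Elem ι n => a * x) ∧
    Continuous (fun x : Elem ι n => x * a)

/-- A space is feebly compact if every locally finite family of nonempty open
sets is finite. -/
def FeeblyCompact (X : Type*) [TopologicalSpace X] : Prop :=
  ∀ 𝒰 : Set (Set X), (∀ U ∈ 𝒰, IsOpen U ∧ U.Nonempty) →
    LocallyFinite (fun U : 𝒰 => (U : Set X)) → 𝒰.Finite

/-- A space is `d`-feebly compact if every discrete family of open sets is
finite; a family is discrete if every point has a neighbourhood meeting at
most one member of the family. -/
def DFeeblyCompact (X : Type*) [TopologicalSpace X] : Prop :=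
  ∀ 𝒰 : Set (Set X), (∀ U ∈ 𝒰, IsOpen U) →
    (∀ x : X, ∃ V ∈ 𝓝 x, {U ∈ 𝒰 | (U ∩ V).Nonempty}.Subsingleton) → 𝒰.Finite

/-- countably pracompact: there is a dense set `A` such that every infinite
subset of `A` has an accumulation point in `X`. -/
def CountablyPracompact (X : Type*) [TopologicalSpace X] : Prop :=
  ∃ A : Set X, Dense A ∧ ∀ B ⊆ A, B.Infinite → ∃ x : X, AccPt x (Filter.principal B)

/-- H-closed: closed in every Hausdorff space in which it embeds. -/
def HClosed (X : Type*) [TopologicalSpace X] : Prop :=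
  ∀ (Y : Type v) (_ : TopologicalSpace Y), T2Space Y →
    ∀ e : X → Y, IsEmbedding e → IsClosed (Set.range e)

/-- infra H-closed: every continuous image in a first-countable Hausdorff
space is closed. -/
def InfraHClosed (X : Type*) [TopologicalSpace X] : Prop :=
  ∀ (Y : Type v) (_ : TopologicalSpace Y), T2Space Y →
    FirstCountableTopology Y → ∀ f : X → Y, Continuous f → IsClosed (Set.range f)

/-- `Y`-compactness: every continuous image in `Y` is compact. -/
def YCompact (X : Type*) [TopologicalSpace X] (Y : Type*) [TopologicalSpace Y] : Prop :=
  ∀ f : X → Y, Continuous f → IsCompact (Set.range f)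

/-- scattered: every nonempty subset has a point isolated in it. -/
def Scattered (X : Type*) [TopologicalSpace X] : Prop :=
  ∀ S : Set X, S.Nonempty → ∃ x ∈ S, ∃ U : Set X, IsOpen U ∧ U ∩ S = {x}

/-- semiregular: there is a base consisting of regular open sets. -/
def Semiregular (X : Type*) [TopologicalSpace X] : Prop :=
  ∃ B : Set (Set X), TopologicalSpace.IsTopologicalBasis B ∧
    ∀ U ∈ B, interior (closure U) = U

/-- countably compact: every countable open cover has a finite subcover. -/
def CountablyCompact (X : Type*) [TopologicalSpace X] : Prop :=
  ∀ 𝒰 : Set (Set X), 𝒰.Countable → (∀ U ∈ 𝒰, IsOpen U) → ⋃₀ 𝒰 = Set.univ →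
    ∃ 𝒱 ⊆ 𝒰, 𝒱.Finite ∧ ⋃₀ 𝒱 = Set.univ

end ISemi

/-!
The natural order on `I_λ^n` is restriction of partial bijections. For fixed `f`, the map
`x ↦ (f f⁻¹) x (f⁻¹ f)` cuts `x` down to `dom f × ran f`, so it is continuous with finitely many
values, and `↑f` is its fibre over `f`; in a T₁ space such a fibre is clopen. If `f ⋠ g`, then
`↑f × (↑f)ᶜ` is a neighbourhood of `(f, g)` disjoint from the order, by transitivity.
-/

theorem isClopen_preimage_singleton_of_finite_range {X Y : Type*} [TopologicalSpace X]
    [TopologicalSpace Y] [T1Space Y] {g : X → Y} (hg : Continuous g)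
    (hfin : (range g).Finite) (y : Y) : IsClopen (g ⁻¹' {y}) := by
  refine ⟨isClosed_singleton.preimage hg, ?_⟩
  have hfibre : g ⁻¹' {y} = (g ⁻¹' (range g \ {y}))ᶜ := by
    ext x
    simp
  rw [hfibre]
  exact ((hfin.sdiff).isClosed.preimage hg).isOpen_compl

theorem isClosed_setOf_rel_of_isClopen {X : Type*} [TopologicalSpace X] {r : X → X → Prop}
    (refl : ∀ x, r x x) (trans : ∀ x y z, r x y → r y z → r x z)
    (hclopen : ∀ x, IsClopen {y | r x y}) : IsClosed {p : X × X | r p.1 p.2} := by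
  refine isOpen_compl_iff.1 (isOpen_iff_forall_mem_open.2 fun ⟨x, z⟩ hxz => ?_)
  refine ⟨{y | r x y} ×ˢ {y | r x y}ᶜ, ?_, (hclopen x).isOpen.prod (hclopen x).compl.isOpen,
    ⟨refl x, hxz⟩⟩
  rintro ⟨y, w⟩ ⟨hxy, hxw⟩ hyw
  exact hxw (trans x y w hxy hyw)

namespace ISemi

variable {ι : Type*} {n : ℕ}

lemma val_mul (f g : Elem ι n) : (f * g).1 = f.1.trans g.1 := rfl

lemma val_inv (f : Elem ι n) : (inv f).1 = f.1.symm := rfl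

lemma inv_inv (f : Elem ι n) : inv (inv f) = f := Subtype.ext f.1.symm_symm

lemma eq_of_isIdem {e : Elem ι n} (he : IsIdem e) {a b : ι} (hab : e.1 a = some b) : a = b := by
  have h : (e.1 a).bind e.1 = e.1 a := congrArg (fun x : Elem ι n => x.1 a) he
  rw [hab, Option.bind_some] at h
  exact e.1.inj hab h

lemma val_idem_mul_le {e : Elem ι n} (he : IsIdem e) (x : Elem ι n) : (e * x).1 ≤ x.1 := by
  intro a b h
  obtain ⟨c, hc, hcb⟩ := (PEquiv.mem_trans _ _ _ _).1 h
  rwa [eq_of_isIdem he hc]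

lemma val_mul_idem_le {e : Elem ι n} (he : IsIdem e) (x : Elem ι n) : (x * e).1 ≤ x.1 := by
  intro a b h
  obtain ⟨c, hc, hcb⟩ := (PEquiv.mem_trans _ _ _ _).1 h
  rwa [eq_of_isIdem he hcb] at hc

lemma mul_inv_mul_of_le {f g : Elem ι n} (h : f.1 ≤ g.1) : f * inv f * g = f := by
  refine Subtype.ext (PEquiv.ext fun a => ?_)
  change ((f.1.trans f.1.symm).trans g.1) a = f.1 a
  rw [PEquiv.self_trans_symm]
  cases hfa : f.1 a with
  | none =>
    refine (PEquiv.trans_eq_none _ _ _).2 fun b _ => Or.inl fun hb => ?_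
    obtain ⟨rfl, hdom⟩ := PEquiv.mem_ofSet_iff.1 hb
    simp [hfa] at hdom
  | some b => exact (PEquiv.trans_eq_some _ _ _ _).2 ⟨a, by simp [hfa], h a b hfa⟩

lemma mul_inv_mul_self (f : Elem ι n) : f * inv f * f = f := mul_inv_mul_of_le le_rfl

lemma isIdem_mul_inv (f : Elem ι n) : IsIdem (f * inv f) := by
  rw [IsIdem, ← mul_assoc, mul_inv_mul_self]

lemma isIdem_inv_mul (f : Elem ι n) : IsIdem (inv f * f) := by
  simpa only [inv_inv] using isIdem_mul_inv (inv f)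

lemma nle_iff_val_le {f g : Elem ι n} : nle f g ↔ f.1 ≤ g.1 :=
  ⟨fun ⟨_, he, hf⟩ => hf ▸ val_idem_mul_le he g,
    fun h => ⟨f * inv f, isIdem_mul_inv f, (mul_inv_mul_of_le h).symm⟩⟩

lemma nle_refl (f : Elem ι n) : nle f f := nle_iff_val_le.2 le_rfl

lemma nle_trans {f g h : Elem ι n} (hfg : nle f g) (hgh : nle g h) : nle f h :=
  nle_iff_val_le.2 ((nle_iff_val_le.1 hfg).trans (nle_iff_val_le.1 hgh))

def sandwich (f x : Elem ι n) : Elem ι n := f * inv f * x * (inv f * f)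

lemma sandwich_eq_self_iff {f x : Elem ι n} : sandwich f x = f ↔ f.1 ≤ x.1 := by
  constructor
  · intro h
    calc f.1 = (sandwich f x).1 := by rw [h]
      _ ≤ (f * inv f * x).1 := val_mul_idem_le (isIdem_inv_mul f) _
      _ ≤ x.1 := val_idem_mul_le (isIdem_mul_inv f) x
  · intro h
    rw [sandwich, mul_inv_mul_of_le h, ← mul_assoc, mul_inv_mul_self]

lemma dom_mul_subset (x y : Elem ι n) : dom (x * y) ⊆ dom x := by
  intro a ha
  obtain ⟨c, hc⟩ := Option.isSome_iff_exists.1 ha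
  obtain ⟨b, hb, -⟩ := (PEquiv.trans_eq_some _ _ _ _).1 hc
  simp [dom, hb]

lemma ran_mul_subset (x y : Elem ι n) : ran (x * y) ⊆ ran y := by
  intro b hb
  refine dom_mul_subset (inv y) (inv x) ?_
  simpa [ran, dom, val_mul, val_inv, PEquiv.symm_trans_rev] using hb

lemma dom_finite (f : Elem ι n) : (dom f).Finite := Set.finite_of_encard_le_coe f.2

lemma ran_finite (f : Elem ι n) : (ran f).Finite := dom_finite (inv f)

lemma finite_setOf_dom_ran_subset {D R : Set ι} (hD : D.Finite) (hR : R.Finite) :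
    {y : Elem ι n | dom y ⊆ D ∧ ran y ⊆ R}.Finite := by
  let graph : Elem ι n → Set (ι × ι) := fun y => {p | y.1 p.1 = some p.2}
  refine Set.Finite.of_finite_image (f := graph) ((hD.prod hR).finite_subsets.subset ?_) ?_
  · rintro _ ⟨y, ⟨hyD, hyR⟩, rfl⟩ ⟨a, b⟩ hab
    exact ⟨hyD (by simp [dom, hab.out]),
      hyR (by simp [ran, (y.1.eq_some_iff).2 hab.out])⟩
  · intro y _ z _ h
    exact Subtype.ext (PEquiv.ext fun a => Option.ext fun b => Set.ext_iff.1 h (a, b))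

lemma finite_range_sandwich (f : Elem ι n) : (range (sandwich f)).Finite := by
  refine (finite_setOf_dom_ran_subset (dom_finite f) (ran_finite f)).subset ?_
  rintro _ ⟨x, rfl⟩
  exact ⟨(dom_mul_subset _ _).trans ((dom_mul_subset _ _).trans (dom_mul_subset _ _)),
    (ran_mul_subset _ _).trans (ran_mul_subset _ _)⟩

variable [TopologicalSpace (Elem ι n)]

lemma continuous_sandwich (hshift : ShiftContinuous ι n) (f : Elem ι n) :
    Continuous (sandwich f) :=
  (hshift _).2.comp (hshift _).1

lemma isClopen_upset [T1Space (Elem ι n)] (hshift : ShiftContinuous ι n) (f : Elem ι n) :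
    IsClopen (upset f) := by
  have hupset : upset f = sandwich f ⁻¹' {f} := by
    ext x
    exact nle_iff_val_le.trans sandwich_eq_self_iff.symm
  rw [hupset]
  exact isClopen_preimage_singleton_of_finite_range (continuous_sandwich hshift f)
    (finite_range_sandwich f) f

end ISemi

theorem stmt9_general (ι : Type*) (n : ℕ)
    [TopologicalSpace (ISemi.Elem ι n)] [T1Space (ISemi.Elem ι n)]
    (hshift : ISemi.ShiftContinuous ι n) :
    IsClosed {p : ISemi.Elem ι n × ISemi.Elem ι n | ISemi.nle p.1 p.2} :=
  isClosed_setOf_rel_of_isClopen ISemi.nle_refl (fun _ _ _ => ISemi.nle_trans)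
    (ISemi.isClopen_upset hshift)

theorem stmt9 (ι : Type*) [Infinite ι] (n : ℕ) (hn : 0 < n)
    [TopologicalSpace (ISemi.Elem ι n)] [T1Space (ISemi.Elem ι n)]
    (hshift : ISemi.ShiftContinuous ι n) :
    IsClosed {p : ISemi.Elem ι n × ISemi.Elem ι n | ISemi.nle p.1 p.2} :=
  stmt9_general ι n hshift
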